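/- arXiv:1902.01688 — 6 statements merged into one kernel-verified Lean document; each statement's English description precedes it below -/
import Mathlib

section
/- Let k > 0 and let (f_n)_{n≥1} be a k-sequence, i.e. there exist constants B > 0, C > 0 and θ ∈ (0,1) such that each f_n is holomorphic on [-1,1]_{k,B,n} and ‖f_n‖_{∞,[-1,1]_{k,B,n}} ≤ C·θ^n. Then the series Σ_{n≥1} f_n|_{[-1,1]} converges uniformly on [-1,1] and its sum is a C^∞ function on [-1,1] that belongs to the Gevrey class G_k([-1,1]). -/
open Metric Set Filter

noncomputable section

/-- The segment `[-1,1]` viewed inside `ℂ`. -/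
def seg : Set ℂ := (fun x : ℝ => (x : ℂ)) '' Set.Icc (-1) 1

/-- The neighborhood `[-1,1]_r` of the segment. -/
def nbd (r : ℝ) : Set ℂ := {z : ℂ | Metric.infDist z seg < r}

/-- The set `[-1,1]_{k,A,n}`. -/
def tube (k A : ℝ) (n : ℕ) : Set ℂ :=
  {z : ℂ | Metric.infDist z seg < A * (n : ℝ) ^ (-(1 : ℝ) / k)}

/-- Sup norm of `f` on `S`. -/
def supOn (f : ℂ → ℂ) (S : Set ℂ) : ℝ := sSup ((fun z => ‖f z‖) '' S)

/-- The Gevrey class `G_k([-1,1])`. -/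
def GevreyClass (k : ℝ) (f : ℝ → ℂ) : Prop :=
  ContDiffOn ℝ (⊤ : ℕ∞) f (Set.Icc (-1) 1) ∧
  ∃ C > 0, ∃ A > 0, ∀ n : ℕ, ∀ x ∈ Set.Icc (-1 : ℝ) 1,
    ‖iteratedDerivWithin n f (Set.Icc (-1 : ℝ) 1) x‖ ≤
      C * A ^ n * (n : ℝ) ^ ((n : ℝ) * (1 + 1 / k))

/-- `(f_n)_{n ≥ 1}` is a `k`-sequence. -/
def IsKSeq (k : ℝ) (f : ℕ → ℂ → ℂ) : Prop :=
  ∃ B > 0, ∃ C > 0, ∃ θ ∈ Set.Ioo (0 : ℝ) 1, ∀ n : ℕ, 1 ≤ n →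
    DifferentiableOn ℂ (f n) (tube k B n) ∧ ∀ z ∈ tube k B n, ‖f n z‖ ≤ C * θ ^ n

/-- The `E(k)` property with threshold `τ` for a sequence of functions on `[-1,1]_σ`. -/
def EPropWith (k σ : ℝ) (φ : ℕ → ℂ → ℂ) (τ : ℝ) : Prop :=
  0 < τ ∧ τ ≤ σ ∧ ∀ A : ℝ, 0 < A → A ≤ τ → ∃ M : ℕ, ∀ n : ℕ, M ≤ n → ∀ p : ℕ,
    ∀ z ∈ tube k A (n + 1), φ p z ∈ tube k A n

/-- The `E(k)` property. -/
def EProp (k σ : ℝ) (φ : ℕ → ℂ → ℂ) : Prop := ∃ τ : ℝ, EPropWith k σ φ τ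

/-- `T` is a linear operator on functions. -/
def IsLinOp (T : (ℂ → ℂ) → ℂ → ℂ) : Prop :=
  (∀ f g : ℂ → ℂ, T (f + g) = T f + T g) ∧ ∀ (c : ℂ) (f : ℂ → ℂ), T (c • f) = c • T f

/-- The quantitative part of the `A(k)` property, for a given `A` and integer `N = N(A)`. -/
def APropAt (k : ℝ) (T : (ℂ → ℂ) → ℂ → ℂ) (ρ A : ℝ) (N : ℕ) : Prop :=
  ∀ n : ℕ, N ≤ n → ∀ f : ℂ → ℂ, DifferentiableOn ℂ f (tube k A n) →
    BddAbove ((fun z => ‖f z‖) '' tube k A n) →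
    DifferentiableOn ℂ (T f) (tube k A (n + 1)) ∧
      ∀ z ∈ tube k A (n + 1), ‖T f z‖ ≤ ρ * supOn f (tube k A n)

/-- The `A(k)` property with `k`-threshold `τ` and contraction constant `ρ`. -/
def AProp (k : ℝ) (T : (ℂ → ℂ) → ℂ → ℂ) (τ ρ : ℝ) : Prop :=
  0 < τ ∧ ρ ∈ Set.Ioo (0 : ℝ) 1 ∧
  (∀ A : ℝ, 0 < A → A ≤ τ → ∃ N : ℕ, APropAt k T ρ A N) ∧
  (∀ f : ℂ → ℂ, (∃ r > 0, DifferentiableOn ℂ f (nbd r)) →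
      ∀ z ∈ seg, ‖T f z‖ ≤ ρ * supOn f seg)

open scoped Topology ContDiff
open Real Nat

/-!
Around each point of `[-1,1]` the disc of radius `B n^{-1/k} / 2` lies in the domain of `f_n`,
so Cauchy's estimates give `‖f_n^{(p)}‖ ≤ p! C (2/B)^p n^{p/k} θ^n` on `[-1,1]`. Writing
`θ^n = μ^n μ^n` with `μ = √θ`, one factor absorbs the growth in `n`: since `t ≤ exp t`,
`n^{p/k} μ^n ≤ (p / (k L))^{p/k}` with `L = -log μ`. Hence the `p`-th derived series is dominated
by `C A^p p^{p(1+1/k)} μ^n`, which is summable in `n`, and termwise differentiation on the convex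
set `[-1,1]` (mean value inequality plus uniform convergence of the derived series) shows that the
sum is smooth, with derivatives bounded as the Gevrey class `G_k` requires.
-/

section ConvexSeries

variable {F : Type*} [NormedAddCommGroup F] [NormedSpace ℝ F] {s : Set ℝ}

theorem Convex.norm_sub_limit_sub_le (hs : Convex ℝ s) {g g' : ℕ → ℝ → F} {G : ℝ → F}
    (hg : ∀ M, ∀ x ∈ s, HasDerivWithinAt (g M) (g' M x) s x)
    (hG : ∀ x ∈ s, Tendsto (fun M => g M x) atTop (𝓝 (G x))) {N : ℕ} {ε : ℝ}
    (hg' : ∀ᶠ M in atTop, ∀ x ∈ s, ‖g' N x - g' M x‖ ≤ ε) {x y : ℝ} (hx : x ∈ s) (hy : y ∈ s) :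
    ‖(g N y - G y) - (g N x - G x)‖ ≤ ε * ‖y - x‖ := by
  refine le_of_tendsto (((tendsto_const_nhds.sub (hG y hy)).sub
    (tendsto_const_nhds.sub (hG x hx))).norm) ?_
  filter_upwards [hg'] with M hM
  simpa only [Pi.sub_apply] using hs.norm_image_sub_le_of_norm_hasDerivWithin_le
    (fun z hz => (hg N z hz).sub (hg M z hz)) hM hx hy

theorem Convex.hasDerivWithinAt_of_tendstoUniformlyOn (hs : Convex ℝ s) {g g' : ℕ → ℝ → F}
    {G G' : ℝ → F} (hg : ∀ N, ∀ x ∈ s, HasDerivWithinAt (g N) (g' N x) s x)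
    (hG : ∀ x ∈ s, Tendsto (fun N => g N x) atTop (𝓝 (G x)))
    (hG' : TendstoUniformlyOn g' G' atTop s) {x : ℝ} (hx : x ∈ s) :
    HasDerivWithinAt G (G' x) s x := by
  rw [hasDerivWithinAt_iff_isLittleO, Asymptotics.isLittleO_iff]
  intro c hc
  obtain ⟨N, hN⟩ : ∃ N, ∀ M ≥ N, ∀ y ∈ s, ‖g' M y - G' y‖ ≤ c / 4 := by
    simpa only [dist_eq_norm', eventually_atTop] using
      (Metric.tendstoUniformlyOn_iff.mp hG' _ (by positivity)).mono
        fun M hM y hy => (hM y hy).le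
  have hinc : ∀ y ∈ s, ‖(g N y - G y) - (g N x - G x)‖ ≤ c / 2 * ‖y - x‖ := by
    refine fun y hy => hs.norm_sub_limit_sub_le hg hG ?_ hx hy
    filter_upwards [eventually_ge_atTop N] with M hM z hz
    calc ‖g' N z - g' M z‖ = ‖(g' N z - G' z) - (g' M z - G' z)‖ := by abel_nf
      _ ≤ c / 4 + c / 4 := (norm_sub_le _ _).trans (add_le_add (hN N le_rfl z hz) (hN M hM z hz))
      _ = c / 2 := by ring
  have hlin : ∀ᶠ y in 𝓝[s] x, ‖g N y - g N x - (y - x) • g' N x‖ ≤ c / 4 * ‖y - x‖ :=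
    Asymptotics.isLittleO_iff.mp (hasDerivWithinAt_iff_isLittleO.mp (hg N x hx))
      (by positivity)
  filter_upwards [hlin, self_mem_nhdsWithin] with y hy hys
  calc ‖G y - G x - (y - x) • G' x‖
      = ‖(g N y - g N x - (y - x) • g' N x) - ((g N y - G y) - (g N x - G x))
          + (y - x) • (g' N x - G' x)‖ := by rw [smul_sub]; abel_nf
    _ ≤ c / 4 * ‖y - x‖ + c / 2 * ‖y - x‖ + ‖y - x‖ * (c / 4) := by
        refine (norm_add_le _ _).trans (add_le_add ((norm_sub_le _ _).trans
          (add_le_add hy (hinc y hys))) ?_)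
        rw [norm_smul]
        exact mul_le_mul_of_nonneg_left (hN N le_rfl x hx) (norm_nonneg _)
    _ = c * ‖y - x‖ := by ring

variable [CompleteSpace F]

theorem Convex.hasDerivWithinAt_tsum (hs : Convex ℝ s) {g g' : ℕ → ℝ → F} {u u' : ℕ → ℝ}
    (hu : Summable u) (hu' : Summable u') (hg : ∀ n, ∀ x ∈ s, HasDerivWithinAt (g n) (g' n x) s x)
    (hgu : ∀ n, ∀ x ∈ s, ‖g n x‖ ≤ u n) (hgu' : ∀ n, ∀ x ∈ s, ‖g' n x‖ ≤ u' n) {x : ℝ}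
    (hx : x ∈ s) : HasDerivWithinAt (fun y => ∑' n, g n y) (∑' n, g' n x) s x :=
  hs.hasDerivWithinAt_of_tendstoUniformlyOn
    (fun _ y hy => HasDerivWithinAt.fun_sum fun n _ => hg n y hy)
    (fun _ hy => (tendstoUniformlyOn_tsum_nat hu hgu).tendsto_at hy)
    (tendstoUniformlyOn_tsum_nat hu' hgu') hx

theorem Convex.iteratedDerivWithin_tsum (hs : Convex ℝ s) (hs' : UniqueDiffOn ℝ s)
    {g : ℕ → ℕ → ℝ → F} {u : ℕ → ℕ → ℝ} (hu : ∀ p, Summable (u p))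
    (hg : ∀ p n, ∀ x ∈ s, HasDerivWithinAt (g p n) (g (p + 1) n x) s x)
    (hgu : ∀ p n, ∀ x ∈ s, ‖g p n x‖ ≤ u p n) (p : ℕ) {x : ℝ} (hx : x ∈ s) :
    iteratedDerivWithin p (fun y => ∑' n, g 0 n y) s x = ∑' n, g p n x := by
  induction p generalizing x with
  | zero => rw [iteratedDerivWithin_zero]
  | succ p ih =>
    rw [iteratedDerivWithin_succ, derivWithin_congr (fun y hy => ih hy) (ih hx)]
    exact (hs.hasDerivWithinAt_tsum (hu p) (hu (p + 1)) (hg p) (hgu p) (hgu (p + 1)) hx).derivWithin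
      (hs' x hx)

theorem Convex.contDiffOn_tsum (hs : Convex ℝ s) (hs' : UniqueDiffOn ℝ s)
    {g : ℕ → ℕ → ℝ → F} {u : ℕ → ℕ → ℝ} (hu : ∀ p, Summable (u p))
    (hg : ∀ p n, ∀ x ∈ s, HasDerivWithinAt (g p n) (g (p + 1) n x) s x)
    (hgu : ∀ p n, ∀ x ∈ s, ‖g p n x‖ ≤ u p n) :
    ContDiffOn ℝ ∞ (fun y => ∑' n, g 0 n y) s :=
  contDiffOn_of_differentiableOn_deriv fun p _ _ hx =>
    ((hs.hasDerivWithinAt_tsum (hu p) (hu (p + 1)) (hg p) (hgu p) (hgu (p + 1)) hx).congr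
      (fun _ hy => hs.iteratedDerivWithin_tsum hs' hu hg hgu p hy)
      (hs.iteratedDerivWithin_tsum hs' hu hg hgu p hx)).differentiableWithinAt

end ConvexSeries

theorem Real.rpow_mul_exp_neg_mul_le {x s L : ℝ} (hx : 0 ≤ x) (hs : 0 ≤ s) (hL : 0 < L) :
    x ^ s * exp (-(L * x)) ≤ (s / L) ^ s := by
  rcases hs.eq_or_lt with rfl | hs
  · simpa using exp_le_one_iff.mpr (neg_nonpos.mpr (mul_nonneg hL.le hx))
  have hLx : 0 ≤ L * x / s := by positivity
  have key : (L * x / s) ^ s ≤ exp (L * x) := by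
    calc (L * x / s) ^ s ≤ exp (L * x / s) ^ s :=
          rpow_le_rpow hLx ((le_add_of_nonneg_right zero_le_one).trans (add_one_le_exp _)) hs.le
      _ = exp (L * x) := by rw [← exp_mul, div_mul_cancel₀ _ hs.ne']
  calc x ^ s * exp (-(L * x)) = (s / L) ^ s * ((L * x / s) ^ s * exp (-(L * x))) := by
        rw [← mul_assoc, ← mul_rpow (by positivity) hLx]
        congr 2
        field_simp
    _ ≤ (s / L) ^ s * (exp (L * x) * exp (-(L * x))) := by gcongr
    _ = (s / L) ^ s := by rw [← exp_add, add_neg_cancel, exp_zero, mul_one]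

theorem Real.natCast_rpow_mul_pow_le {μ s : ℝ} (hμ0 : 0 < μ) (hμ1 : μ < 1) (hs : 0 ≤ s) (n : ℕ) :
    (n : ℝ) ^ s * μ ^ n ≤ (s / -log μ) ^ s := by
  have hμn : μ ^ n = exp (-(-log μ * n)) := by
    rw [neg_mul, neg_neg, exp_mul, exp_log hμ0, rpow_natCast]
  rw [hμn]
  exact rpow_mul_exp_neg_mul_le n.cast_nonneg hs (neg_pos.mpr (log_neg hμ0 hμ1))

theorem Nat.factorial_mul_rpow_le (p : ℕ) {t : ℝ} (ht : 0 ≤ t) :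
    (p ! : ℝ) * (p : ℝ) ^ t ≤ (p : ℝ) ^ ((p : ℝ) + t) := by
  rw [rpow_add_of_nonneg p.cast_nonneg p.cast_nonneg ht, rpow_natCast]
  gcongr
  exact_mod_cast p.factorial_le_pow

theorem exists_natCast_rpow_div_mul_pow_le {θ k : ℝ} (hθ0 : 0 < θ) (hθ1 : θ < 1) (hk : 0 < k) :
    ∃ a > 0, ∃ μ ∈ Set.Ioo (0 : ℝ) 1, ∀ p n : ℕ,
      (n : ℝ) ^ ((p : ℝ) / k) * θ ^ n ≤ a ^ p * (p : ℝ) ^ ((p : ℝ) / k) * μ ^ n := by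
  set μ := √θ
  have hμ0 : 0 < μ := sqrt_pos.mpr hθ0
  have hμ1 : μ < 1 := (sqrt_lt' one_pos).mpr (by simpa using hθ1)
  set L := -log μ
  have hL : 0 < L := neg_pos.mpr (log_neg hμ0 hμ1)
  refine ⟨((k * L) ^ (1 / k))⁻¹, by positivity, μ, ⟨hμ0, hμ1⟩, fun p n => ?_⟩
  have hθ : θ ^ n = μ ^ n * μ ^ n := by rw [← mul_pow, mul_self_sqrt hθ0.le]
  have hpk : ((p : ℝ) / k / L) ^ ((p : ℝ) / k) =
      ((k * L) ^ (1 / k))⁻¹ ^ p * (p : ℝ) ^ ((p : ℝ) / k) := by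
    rw [div_div, div_rpow (by positivity) (by positivity), inv_pow, ← rpow_natCast,
      ← rpow_mul (by positivity), one_div_mul_eq_div, div_eq_inv_mul]
  calc (n : ℝ) ^ ((p : ℝ) / k) * θ ^ n = (n : ℝ) ^ ((p : ℝ) / k) * μ ^ n * μ ^ n := by
        rw [hθ, mul_assoc]
    _ ≤ ((p : ℝ) / k / L) ^ ((p : ℝ) / k) * μ ^ n := by
        gcongr
        exact natCast_rpow_mul_pow_le hμ0 hμ1 (by positivity) n
    _ = _ := by rw [hpk]

theorem mem_tube_of_mem_seg {k A : ℝ} {n : ℕ} {z : ℂ} (hz : z ∈ seg) (hA : 0 < A) (hn : 0 < n) :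
    z ∈ tube k A n := by
  change infDist z seg < _
  rw [infDist_zero_of_mem hz]
  positivity

theorem closedBall_subset_tube {k A r : ℝ} {n : ℕ} {z : ℂ} (hz : z ∈ seg)
    (hr : r < A * (n : ℝ) ^ (-(1 : ℝ) / k)) : closedBall z r ⊆ tube k A n :=
  fun _ hw => (infDist_le_dist_of_mem hz).trans_lt ((mem_closedBall.mp hw).trans_lt hr)

theorem isOpen_tube (k A : ℝ) (n : ℕ) : IsOpen (tube k A n) :=
  isOpen_lt (continuous_infDist_pt seg) continuous_const

theorem norm_iteratedDeriv_le_of_tube {k A M : ℝ} (hA : 0 < A) {n : ℕ} (hn : 0 < n) {g : ℂ → ℂ}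
    (hg : DifferentiableOn ℂ g (tube k A n)) (hM : ∀ z ∈ tube k A n, ‖g z‖ ≤ M) {z : ℂ}
    (hz : z ∈ seg) (p : ℕ) :
    ‖iteratedDeriv p g z‖ ≤ p ! * M * (2 / A) ^ p * (n : ℝ) ^ ((p : ℝ) / k) := by
  have hn' : (0 : ℝ) < n := cast_pos.mpr hn
  set r := A * (n : ℝ) ^ (-(1 : ℝ) / k) / 2
  have hr : 0 < r := by positivity
  have hball : closedBall z r ⊆ tube k A n :=
    closedBall_subset_tube hz (half_lt_self (by positivity))
  have hr_pow : (r ^ p)⁻¹ = (2 / A) ^ p * (n : ℝ) ^ ((p : ℝ) / k) := by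
    rw [div_pow, mul_pow, ← rpow_natCast ((n : ℝ) ^ _), ← rpow_mul hn'.le,
      show -(1 : ℝ) / k * p = -((p : ℝ) / k) by ring, rpow_neg hn'.le, div_pow]
    field_simp
  calc ‖iteratedDeriv p g z‖ ≤ p ! * M / r ^ p :=
        Complex.norm_iteratedDeriv_le_of_forall_mem_sphere_norm_le p hr
          (hg.mono (by rwa [closure_ball z hr.ne'])).diffContOnCl
          (fun w hw => hM w (hball (sphere_subset_closedBall hw)))
    _ = _ := by rw [div_eq_mul_inv, hr_pow]; ring

theorem hasDerivAt_iteratedDeriv_ofReal {g : ℂ → ℂ} {U : Set ℂ} (hU : IsOpen U)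
    (hg : DifferentiableOn ℂ g U) (p : ℕ) {x : ℝ} (hx : (x : ℂ) ∈ U) :
    HasDerivAt (fun y : ℝ => iteratedDeriv p g y) (iteratedDeriv (p + 1) g x) x := by
  rw [iteratedDeriv_succ]
  refine HasDerivAt.comp_ofReal (DifferentiableAt.hasDerivAt ?_)
  rw [iteratedDeriv_eq_iterate]
  exact ((hg.analyticOnNhd hU).iterated_deriv p x hx).differentiableAt

namespace IsKSeq

variable {k : ℝ} {f : ℕ → ℂ → ℂ}

theorem hasDerivAt_iteratedDeriv (hf : IsKSeq k f) (p n : ℕ) {x : ℝ} (hx : x ∈ Icc (-1) 1) :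
    HasDerivAt (fun y : ℝ => iteratedDeriv p (f (n + 1)) y)
      (iteratedDeriv (p + 1) (f (n + 1)) x) x := by
  obtain ⟨B, hB, _, _, _, _, hfn⟩ := hf
  exact hasDerivAt_iteratedDeriv_ofReal (isOpen_tube k B (n + 1)) (hfn (n + 1) le_add_self).1 p
    (mem_tube_of_mem_seg ⟨x, hx, rfl⟩ hB n.succ_pos)

theorem exists_norm_iteratedDeriv_le (hk : 0 < k) (hf : IsKSeq k f) :
    ∃ C > 0, ∃ A > 0, ∃ μ ∈ Ioo (0 : ℝ) 1, ∀ p n : ℕ, ∀ z ∈ seg,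
      ‖iteratedDeriv p (f (n + 1)) z‖ ≤ C * A ^ p * (p : ℝ) ^ ((p : ℝ) * (1 + 1 / k)) * μ ^ n := by
  obtain ⟨B, hB, C, hC, θ, ⟨hθ0, hθ1⟩, hfn⟩ := hf
  obtain ⟨a, ha, μ, ⟨hμ0, hμ1⟩, hweight⟩ := exists_natCast_rpow_div_mul_pow_le hθ0 hθ1 hk
  refine ⟨C, hC, 2 / B * a, by positivity, μ, ⟨hμ0, hμ1⟩, fun p n z hz => ?_⟩
  obtain ⟨hdiff, hbound⟩ := hfn (n + 1) le_add_self
  calc ‖iteratedDeriv p (f (n + 1)) z‖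
      ≤ p ! * (C * θ ^ (n + 1)) * (2 / B) ^ p * ((n + 1 : ℕ) : ℝ) ^ ((p : ℝ) / k) :=
        norm_iteratedDeriv_le_of_tube hB n.succ_pos hdiff hbound hz p
    _ = C * (2 / B) ^ p * p ! * (((n + 1 : ℕ) : ℝ) ^ ((p : ℝ) / k) * θ ^ (n + 1)) := by ring
    _ ≤ C * (2 / B) ^ p * p ! * (a ^ p * (p : ℝ) ^ ((p : ℝ) / k) * μ ^ (n + 1)) :=
        mul_le_mul_of_nonneg_left (hweight p (n + 1)) (by positivity)
    _ = C * (2 / B * a) ^ p * (p ! * (p : ℝ) ^ ((p : ℝ) / k)) * μ ^ (n + 1) := by ring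
    _ ≤ C * (2 / B * a) ^ p * (p : ℝ) ^ ((p : ℝ) + p / k) * μ ^ n := by
        gcongr C * _ * ?_ * ?_
        · exact factorial_mul_rpow_le p (by positivity)
        · exact pow_le_pow_of_le_one hμ0.le hμ1.le n.le_succ
    _ = _ := by rw [mul_one_add, mul_one_div]

end IsKSeq

/-- a `k`-sequence sums, uniformly on `[-1,1]`, to a function of
the Gevrey class `G_k([-1,1])`. -/
theorem sum_of_kSeq_mem_gevrey (k : ℝ) (hk : 0 < k) (f : ℕ → ℂ → ℂ)
    (hf : IsKSeq k f) :
    ∃ F : ℝ → ℂ,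
      TendstoUniformlyOn (fun N (x : ℝ) => ∑ n ∈ Finset.Icc 1 N, f n (x : ℂ))
        F Filter.atTop (Set.Icc (-1) 1) ∧ GevreyClass k F := by
  obtain ⟨C, hC, A, hA, μ, ⟨hμ0, hμ1⟩, hbound⟩ := hf.exists_norm_iteratedDeriv_le hk
  -- shifted by one, since the series starts at `n = 1` and `f 0` is unconstrained
  set g : ℕ → ℕ → ℝ → ℂ := fun p n x => iteratedDeriv p (f (n + 1)) x
  set u : ℕ → ℕ → ℝ := fun p n => C * A ^ p * (p : ℝ) ^ ((p : ℝ) * (1 + 1 / k)) * μ ^ n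
  have hu p : Summable (u p) := (summable_geometric_of_lt_one hμ0.le hμ1).mul_left _
  have hgu p n : ∀ x ∈ Icc (-1 : ℝ) 1, ‖g p n x‖ ≤ u p n := fun x hx => hbound p n x ⟨x, hx, rfl⟩
  have hg p n : ∀ x ∈ Icc (-1 : ℝ) 1, HasDerivWithinAt (g p n) (g (p + 1) n x) (Icc (-1) 1) x :=
    fun _ hx => (hf.hasDerivAt_iteratedDeriv p n hx).hasDerivWithinAt
  have hs : UniqueDiffOn ℝ (Icc (-1 : ℝ) 1) := uniqueDiffOn_Icc (by norm_num)
  refine ⟨fun x => ∑' n, g 0 n x, ?_, (convex_Icc _ _).contDiffOn_tsum hs hu hg hgu,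
    C / (1 - μ), div_pos hC (sub_pos.mpr hμ1), A, hA, fun p x hx => ?_⟩
  · refine (tendstoUniformlyOn_tsum_nat (hu 0) (hgu 0)).congr (.of_forall fun N x _ => ?_)
    dsimp only
    rw [← Finset.Ico_add_one_right_eq_Icc, Finset.sum_Ico_eq_sum_range, Nat.add_sub_cancel]
    simp [g, add_comm]
  · rw [(convex_Icc _ _).iteratedDerivWithin_tsum hs hu hg hgu p hx]
    calc ‖∑' n, g p n x‖ ≤ ∑' n, u p n := tsum_of_norm_bounded (hu p).hasSum (hgu p · x hx)
      _ = C / (1 - μ) * A ^ p * (p : ℝ) ^ ((p : ℝ) * (1 + 1 / k)) := by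
        rw [tsum_mul_left, tsum_geometric_of_lt_one hμ0.le hμ1]
        ring
end
end

section
/- Let k > 0 and let T be a linear operator that maps each function holomorphic on some neighborhood of the segment I = [-1,1] ⊂ ℂ to a function holomorphic on some neighborhood of I, and which satisfies the A(k) property. If (g_n)_{n≥1} and (h_n)_{n≥1} are two k-sequences such that Σ_{n≥1} g_n|_{[-1,1]} = Σ_{n≥1} h_n|_{[-1,1]} (both series converging uniformly on [-1,1]), then the series Σ_{n≥1} (T g_n)|_{[-1,1]} and Σ_{n≥1} (T h_n)|_{[-1,1]} converge uniformly on [-1,1] and have the same sum. Consequently T induces a well-defined linear endomorphism T̃ of the Gevrey class G_k([-1,1]) determined by T̃(Σ_{n≥1} f_n|_{[-1,1]}) = Σ_{n≥1} (T f_n)|_{[-1,1]} for every k-sequence (f_n). -/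
open Metric Set Filter

noncomputable section

/-- if two `k`-sequences `(g_n)` and `(h_n)` have the same sum
(uniformly on `[-1,1]`), then the series `Σ (T g_n)|_{[-1,1]}` and
`Σ (T h_n)|_{[-1,1]}` converge uniformly on `[-1,1]` to the same sum; hence
`T` induces a well-defined endomorphism of `G_k([-1,1])`. -/
theorem inducedOp_wellDefined (k τ ρ : ℝ) (hk : 0 < k)
    (T : (ℂ → ℂ) → ℂ → ℂ) (hTlin : IsLinOp T) (hTA : AProp k T τ ρ)
    (g h : ℕ → ℂ → ℂ) (hg : IsKSeq k g) (hh : IsKSeq k h) (G : ℝ → ℂ)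
    (hgG : TendstoUniformlyOn (fun N (x : ℝ) => ∑ n ∈ Finset.Icc 1 N, g n (x : ℂ))
      G Filter.atTop (Set.Icc (-1) 1))
    (hhG : TendstoUniformlyOn (fun N (x : ℝ) => ∑ n ∈ Finset.Icc 1 N, h n (x : ℂ))
      G Filter.atTop (Set.Icc (-1) 1)) :
    ∃ F : ℝ → ℂ,
      TendstoUniformlyOn (fun N (x : ℝ) => ∑ n ∈ Finset.Icc 1 N, T (g n) (x : ℂ))
        F Filter.atTop (Set.Icc (-1) 1) ∧
      TendstoUniformlyOn (fun N (x : ℝ) => ∑ n ∈ Finset.Icc 1 N, T (h n) (x : ℂ))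
        F Filter.atTop (Set.Icc (-1) 1) := by
  classical
  obtain ⟨Bg, hBg, Cg, hCg, θg, hθg, hgseq⟩ := hg
  obtain ⟨Bh, hBh, Ch, hCh, θh, hθh, hhseq⟩ := hh
  obtain ⟨hτ, hρ, -, hTseg⟩ := hTA
  -- basic facts about `seg` and tubes
  have hsegmem : ∀ x : ℝ, x ∈ Set.Icc (-1:ℝ) 1 → ((x:ℂ) ∈ seg) := fun x hx => ⟨x, hx, rfl⟩
  have hseg_ne : seg.Nonempty := ⟨(0:ℂ), 0, by norm_num, by norm_num⟩
  have hrpos : ∀ n : ℕ, 1 ≤ n → ∀ A : ℝ, 0 < A → 0 < A * (n:ℝ) ^ (-(1:ℝ)/k) := by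
    intro n hn A hA
    have hn' : (0:ℝ) < (n:ℝ) := by exact_mod_cast hn
    positivity
  have hseg_tube : ∀ (n : ℕ) (A : ℝ), 1 ≤ n → 0 < A → seg ⊆ tube k A n := by
    intro n A hn hA z hz
    have : Metric.infDist z seg = 0 := Metric.infDist_zero_of_mem hz
    simp only [tube, Set.mem_setOf_eq, this]
    exact hrpos n hn A hA
  have hsup_le : ∀ (f : ℂ → ℂ) (M : ℝ), 0 ≤ M → (∀ z ∈ seg, ‖f z‖ ≤ M) →
      supOn f seg ≤ M := by
    intro f M hM hb
    refine Real.sSup_le ?_ hM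
    rintro y ⟨z, hz, rfl⟩
    exact hb z hz
  -- key bound on seg via part (ii) of A(k)
  have keybound : ∀ (B C θ : ℝ), 0 < B → 0 < C → θ ∈ Set.Ioo (0:ℝ) 1 →
      ∀ f : ℕ → ℂ → ℂ,
      (∀ n : ℕ, 1 ≤ n → DifferentiableOn ℂ (f n) (tube k B n) ∧
        ∀ z ∈ tube k B n, ‖f n z‖ ≤ C * θ ^ n) →
      ∀ n : ℕ, 1 ≤ n → ∀ z ∈ seg, ‖T (f n) z‖ ≤ ρ * (C * θ ^ n) := by
    intro B C θ hB hC hθ f hf n hn z hz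
    have hdiff : DifferentiableOn ℂ (f n) (nbd (B * (n:ℝ) ^ (-(1:ℝ)/k))) := (hf n hn).1
    have h1 := hTseg (f n) ⟨B * (n:ℝ) ^ (-(1:ℝ)/k), hrpos n hn B hB, hdiff⟩ z hz
    have h2 : supOn (f n) seg ≤ C * θ ^ n := by
      refine hsup_le _ _ (mul_nonneg hC.le (pow_nonneg hθ.1.le n)) ?_
      intro w hw
      exact (hf n hn).2 w (hseg_tube n B hn hB hw)
    calc ‖T (f n) z‖ ≤ ρ * supOn (f n) seg := h1
      _ ≤ ρ * (C * θ ^ n) := mul_le_mul_of_nonneg_left h2 hρ.1.le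
  -- uniform convergence of a dominated series of `T f n`
  have series_conv : ∀ (C θ : ℝ) (f : ℕ → ℂ → ℂ), 0 < C → θ ∈ Set.Ioo (0:ℝ) 1 →
      (∀ n : ℕ, 1 ≤ n → ∀ z ∈ seg, ‖T (f n) z‖ ≤ ρ * (C * θ ^ n)) →
      ∃ F : ℝ → ℂ, TendstoUniformlyOn
        (fun N (x : ℝ) => ∑ n ∈ Finset.Icc 1 N, T (f n) (x:ℂ)) F
        Filter.atTop (Set.Icc (-1) 1) := by
    intro C θ f hC hθ hb
    set φ : ℕ → ℝ → ℂ := fun n x => if n = 0 then 0 else T (f n) (x:ℂ) with hφ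
    have hu : Summable (fun n : ℕ => ρ * (C * θ ^ n)) :=
      ((summable_geometric_of_lt_one hθ.1.le hθ.2).mul_left C).mul_left ρ
    have hbdd : ∀ n : ℕ, ∀ x ∈ Set.Icc (-1:ℝ) 1, ‖φ n x‖ ≤ ρ * (C * θ ^ n) := by
      intro n x hx
      rcases Nat.eq_zero_or_pos n with rfl | hn
      · simp only [hφ, if_pos rfl, norm_zero]
        have : (0:ℝ) ≤ C * θ ^ 0 := mul_nonneg hC.le (pow_nonneg hθ.1.le 0)
        nlinarith [hρ.1]
      · have hne : n ≠ 0 := hn.ne'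
        simp only [hφ, if_neg hne]
        exact hb n hn (x:ℂ) (hsegmem x hx)
    have h0 := tendstoUniformlyOn_tsum_nat hu hbdd
    refine ⟨fun x => ∑' n, φ n x, ?_⟩
    have hcomp : Filter.Tendsto (fun N : ℕ => N + 1) Filter.atTop Filter.atTop :=
      Filter.tendsto_add_atTop_nat 1
    have h1 : TendstoUniformlyOn (fun N (x : ℝ) => ∑ n ∈ Finset.range (N+1), φ n x)
        (fun x => ∑' n, φ n x) Filter.atTop (Set.Icc (-1) 1) := by
      rw [Metric.tendstoUniformlyOn_iff] at h0 ⊢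
      intro ε hε
      exact hcomp.eventually (h0 ε hε)
    refine h1.congr (Filter.Eventually.of_forall ?_)
    intro N x _
    show (∑ n ∈ Finset.range (N+1), φ n x) = ∑ n ∈ Finset.Icc 1 N, T (f n) (x:ℂ)
    rw [Finset.range_eq_Ico, Finset.sum_eq_sum_Ico_succ_bot (Nat.succ_pos N)]
    simp only [hφ, if_pos rfl, zero_add, Finset.Ico_add_one_right_eq_Icc]
    refine Finset.sum_congr rfl ?_
    intro n hn
    have hne : n ≠ 0 := by
      have := (Finset.mem_Icc.mp hn).1; omega
    simp only [if_neg hne]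
  obtain ⟨F, hF⟩ := series_conv Cg θg g hCg hθg (keybound Bg Cg θg hBg hCg hθg g hgseq)
  refine ⟨F, hF, ?_⟩
  -- linearity facts
  have hT0 : T 0 = 0 := by
    have h := hTlin.2 0 0
    simpa using h
  have hTsub : ∀ f1 f2 : ℂ → ℂ, T (f1 - f2) = T f1 - T f2 := by
    intro f1 f2
    have h1 : f1 - f2 = f1 + (-1:ℂ) • f2 := by
      ext z; simp [sub_eq_add_neg]
    rw [h1, hTlin.1, hTlin.2]
    ext z; simp [sub_eq_add_neg]
  have hTsum : ∀ (s : Finset ℕ) (Φ : ℕ → ℂ → ℂ),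
      T (∑ n ∈ s, Φ n) = ∑ n ∈ s, T (Φ n) := by
    intro s Φ
    induction s using Finset.cons_induction with
    | empty => simpa using hT0
    | cons a s ha ih => rw [Finset.sum_cons, hTlin.1, ih, Finset.sum_cons]
  set d : ℕ → ℂ → ℂ := fun n => g n - h n with hd
  set S : ℕ → ℂ → ℂ := fun N => ∑ n ∈ Finset.Icc 1 N, d n with hS
  set Bm : ℝ := min Bg Bh with hBm
  have hBm0 : 0 < Bm := lt_min hBg hBh
  -- monotonicity of tubes
  have tube_mono_A : ∀ (A A' : ℝ) (n : ℕ), A ≤ A' → tube k A n ⊆ tube k A' n := by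
    intro A A' n hAA z hz
    simp only [tube, Set.mem_setOf_eq] at hz ⊢
    have hr : (0:ℝ) ≤ (n:ℝ) ^ (-(1:ℝ)/k) := Real.rpow_nonneg (Nat.cast_nonneg n) _
    exact lt_of_lt_of_le hz (mul_le_mul_of_nonneg_right hAA hr)
  have tube_mono_n : ∀ (A : ℝ) (n m : ℕ), 0 < A → 1 ≤ n → n ≤ m →
      tube k A m ⊆ tube k A n := by
    intro A n m hA hn hnm z hz
    simp only [tube, Set.mem_setOf_eq] at hz ⊢
    have hn' : (0:ℝ) < (n:ℝ) := by exact_mod_cast hn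
    have hnm' : (n:ℝ) ≤ (m:ℝ) := by exact_mod_cast hnm
    have hexp : (-(1:ℝ)/k) ≤ 0 := by
      have : (0:ℝ) < 1/k := by positivity
      simp only [neg_div]; linarith
    have := Real.rpow_le_rpow_of_nonpos hn' hnm' hexp
    exact lt_of_lt_of_le hz (mul_le_mul_of_nonneg_left this hA.le)
  -- S N is holomorphic on a neighborhood of seg for N ≥ 1
  have hSdiff : ∀ N : ℕ, 1 ≤ N → ∃ r > 0, DifferentiableOn ℂ (S N) (nbd r) := by
    intro N hN
    refine ⟨Bm * (N:ℝ) ^ (-(1:ℝ)/k), hrpos N hN Bm hBm0, ?_⟩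
    have : (S N) = fun z => ∑ n ∈ Finset.Icc 1 N, d n z := by
      funext z; simp [hS, Finset.sum_apply]
    rw [this]
    refine DifferentiableOn.fun_sum ?_
    intro n hn
    obtain ⟨hn1, hn2⟩ := Finset.mem_Icc.mp hn
    have hsub : nbd (Bm * (N:ℝ) ^ (-(1:ℝ)/k)) ⊆ tube k Bm n :=
      tube_mono_n Bm n N hBm0 hn1 hn2
    have hdg : DifferentiableOn ℂ (g n) (tube k Bm n) :=
      ((hgseq n hn1).1).mono (tube_mono_A Bm Bg n (min_le_left _ _))
    have hdh : DifferentiableOn ℂ (h n) (tube k Bm n) :=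
      ((hhseq n hn1).1).mono (tube_mono_A Bm Bh n (min_le_right _ _))
    exact (hdg.sub hdh).mono hsub
  -- identify partial sums of T d with T applied to partial sums
  have hDlin : ∀ (N : ℕ) (z : ℂ),
      (∑ n ∈ Finset.Icc 1 N, (T (g n) z - T (h n) z)) = T (S N) z := by
    intro N z
    have h1 : ∀ n : ℕ, T (g n) z - T (h n) z = T (d n) z := by
      intro n
      rw [hd]
      simp only [hTsub (g n) (h n), Pi.sub_apply]
    calc (∑ n ∈ Finset.Icc 1 N, (T (g n) z - T (h n) z))
        = ∑ n ∈ Finset.Icc 1 N, T (d n) z := Finset.sum_congr rfl fun n _ => h1 n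
      _ = (∑ n ∈ Finset.Icc 1 N, T (d n)) z := by rw [Finset.sum_apply]
      _ = T (S N) z := by rw [hS, hTsum]
  -- the difference tends to 0 uniformly
  have hD0 : TendstoUniformlyOn
      (fun N (x : ℝ) => ∑ n ∈ Finset.Icc 1 N, (T (g n) (x:ℂ) - T (h n) (x:ℂ)))
      (fun _ => (0:ℂ)) Filter.atTop (Set.Icc (-1) 1) := by
    rw [Metric.tendstoUniformlyOn_iff]
    intro ε hε
    have hg' := (Metric.tendstoUniformlyOn_iff.mp hgG) (ε/4) (by positivity)
    have hh' := (Metric.tendstoUniformlyOn_iff.mp hhG) (ε/4) (by positivity)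
    filter_upwards [hg', hh', Filter.eventually_ge_atTop 1] with N hgN hhN hN1
    intro x hx
    -- bound on sup of S N on seg
    have hsup : supOn (S N) seg ≤ ε/2 := by
      refine hsup_le _ _ (by positivity) ?_
      rintro z ⟨y, hy, rfl⟩
      have e1 := hgN y hy
      have e2 := hhN y hy
      rw [dist_eq_norm] at e1 e2
      have hv : S N (y:ℂ) = (∑ n ∈ Finset.Icc 1 N, g n (y:ℂ)) -
          (∑ n ∈ Finset.Icc 1 N, h n (y:ℂ)) := by
        simp [hS, hd, Finset.sum_apply, Finset.sum_sub_distrib]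
      rw [hv]
      have : (∑ n ∈ Finset.Icc 1 N, g n (y:ℂ)) - (∑ n ∈ Finset.Icc 1 N, h n (y:ℂ)) =
          (G y - (∑ n ∈ Finset.Icc 1 N, h n (y:ℂ))) - (G y - (∑ n ∈ Finset.Icc 1 N, g n (y:ℂ))) := by
        ring
      rw [this]
      calc ‖_ - _‖ ≤ ‖G y - (∑ n ∈ Finset.Icc 1 N, h n (y:ℂ))‖ +
            ‖G y - (∑ n ∈ Finset.Icc 1 N, g n (y:ℂ))‖ := norm_sub_le _ _
        _ ≤ ε/4 + ε/4 := add_le_add e2.le e1.le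
        _ = ε/2 := by ring
    have hTS := hTseg (S N) (hSdiff N hN1) (x:ℂ) (hsegmem x hx)
    have hb : ‖T (S N) (x:ℂ)‖ ≤ ρ * (ε/2) :=
      le_trans hTS (mul_le_mul_of_nonneg_left hsup hρ.1.le)
    rw [dist_eq_norm]
    have : ‖(0:ℂ) - ∑ n ∈ Finset.Icc 1 N, (T (g n) (x:ℂ) - T (h n) (x:ℂ))‖ =
        ‖T (S N) (x:ℂ)‖ := by
      rw [zero_sub, norm_neg, hDlin]
    rw [this]
    nlinarith [hρ.1, hρ.2, hε]
  -- conclude: h-partial sums = g-partial sums minus difference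
  have := hF.sub hD0
  refine this.congr (Filter.Eventually.of_forall fun N x hx => ?_) |>.congr_right
    (fun x hx => by simp)
  simp only [Pi.sub_apply, Finset.sum_sub_distrib]
  ring
end
end

section
/- Let σ > 0 and let ψ be holomorphic on [-1,1]_σ with ψ([-1,1]) ⊆ [-1,1] and λ(ψ) ≤ 1 (i.e. ‖ψ^{(n)}‖_{∞,[-1,1]} ≤ n! for every n ≥ 1). Then ψ verifies the E(1) property; more precisely, for every A ∈ (0, min(1/2, σ)) and every integer p ≥ 1 one has ψ([-1,1]_{1,A,p+1}) ⊆ [-1,1]_{1,A,p}, i.e. if dist(z, I) < A/(p+1) then dist(ψ(z), I) < A/p. -/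
open Metric Set Filter

noncomputable section

/- Let `x ∈ [-1,1]` be a point nearest to `z` and `r = |z - x|`. Expanding `ψ` in its Taylor series
at `x`, the bound `‖ψ⁽ⁿ⁾(x)‖ ≤ n!` dominates `ψ z - ψ x` by the geometric series `∑_{n ≥ 1} rⁿ`,
so `dist(ψ z, [-1,1]) ≤ r / (1 - r)` because `ψ x ∈ [-1,1]`. For `r < A / (p + 1)` and `A ≤ 1`
this is `< A / p`.
-/

lemma isCompact_seg : IsCompact seg :=
  isCompact_Icc.image Complex.continuous_ofReal

lemma seg_nonempty : seg.Nonempty :=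
  ⟨0, 0, by norm_num, Complex.ofReal_zero⟩

lemma ball_subset_nbd {x : ℂ} (hx : x ∈ seg) (r : ℝ) : ball x r ⊆ nbd r := fun _ hw =>
  (infDist_le_dist_of_mem hx).trans_lt hw

lemma mem_tube_one_iff {A : ℝ} {n : ℕ} {z : ℂ} : z ∈ tube 1 A n ↔ infDist z seg < A / n := by
  rw [tube, mem_ofPred_eq, div_one, Real.rpow_neg_one, div_eq_mul_inv]

lemma norm_sub_le_of_norm_iteratedDeriv_le_factorial {E : Type*} [NormedAddCommGroup E]
    [NormedSpace ℂ E] [CompleteSpace E] {f : ℂ → E} {c z : ℂ} {R : ℝ}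
    (hf : DifferentiableOn ℂ f (ball c R)) (hz : z ∈ ball c R) (hz1 : ‖z - c‖ < 1)
    (hd : ∀ n : ℕ, 1 ≤ n → ‖iteratedDeriv n f c‖ ≤ (n.factorial : ℝ)) :
    ‖f z - f c‖ ≤ ‖z - c‖ / (1 - ‖z - c‖) := by
  set r := ‖z - c‖
  have htaylor := (hasSum_nat_add_iff' 1).2 (Complex.hasSum_taylorSeries_on_ball hf hz)
  simp only [Finset.range_one, Finset.sum_singleton, Nat.factorial_zero, Nat.cast_one, inv_one,
    pow_zero, iteratedDeriv_zero, one_smul] at htaylor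
  have hgeom : HasSum (fun n : ℕ => r ^ (n + 1)) (r / (1 - r)) := by
    simpa only [pow_succ', div_eq_mul_inv] using
      (hasSum_geometric_of_lt_one (norm_nonneg _) hz1).mul_left r
  refine htaylor.norm_le_of_bounded hgeom fun n => ?_
  calc ‖((n + 1).factorial : ℂ)⁻¹ • (z - c) ^ (n + 1) • iteratedDeriv (n + 1) f c‖
      = ((n + 1).factorial : ℝ)⁻¹ * (r ^ (n + 1) * ‖iteratedDeriv (n + 1) f c‖) := by
        rw [norm_smul, norm_smul, norm_inv, norm_pow, Complex.norm_natCast]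
    _ ≤ ((n + 1).factorial : ℝ)⁻¹ * (r ^ (n + 1) * ((n + 1).factorial : ℝ)) := by
        gcongr; exact hd (n + 1) n.succ_pos
    _ = r ^ (n + 1) := by field_simp

section

variable {σ : ℝ} {ψ : ℂ → ℂ}

lemma infDist_seg_apply_le (hψd : DifferentiableOn ℂ ψ (nbd σ)) (hψseg : ∀ z ∈ seg, ψ z ∈ seg)
    (hlam : ∀ n : ℕ, 1 ≤ n → ∀ z ∈ seg, ‖iteratedDeriv n ψ z‖ ≤ (n.factorial : ℝ)) {z : ℂ}
    (hzσ : infDist z seg < σ) (hz1 : infDist z seg < 1) :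
    infDist (ψ z) seg ≤ infDist z seg / (1 - infDist z seg) := by
  obtain ⟨x, hx, hdist⟩ := isCompact_seg.exists_infDist_eq_dist seg_nonempty z
  rw [hdist, dist_eq_norm] at hzσ hz1 ⊢
  calc infDist (ψ z) seg ≤ dist (ψ z) (ψ x) := infDist_le_dist_of_mem (hψseg x hx)
    _ ≤ ‖z - x‖ / (1 - ‖z - x‖) := by
      rw [dist_eq_norm]
      exact norm_sub_le_of_norm_iteratedDeriv_le_factorial
        (hψd.mono (ball_subset_nbd hx σ)) (mem_ball_iff_norm.2 hzσ) hz1 fun n hn => hlam n hn x hx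

lemma div_one_sub_lt_div_of_lt_div_add_one {r A p : ℝ} (hr : 0 ≤ r) (hA : A ≤ 1) (hp : 0 < p)
    (h : r < A / (p + 1)) : r / (1 - r) < A / p := by
  rw [lt_div_iff₀ (by linarith)] at h
  rw [div_lt_div_iff₀ (by nlinarith) hp]
  nlinarith

lemma mapsTo_tube_one_succ (hψd : DifferentiableOn ℂ ψ (nbd σ))
    (hψseg : ∀ z ∈ seg, ψ z ∈ seg)
    (hlam : ∀ n : ℕ, 1 ≤ n → ∀ z ∈ seg, ‖iteratedDeriv n ψ z‖ ≤ (n.factorial : ℝ))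
    {A : ℝ} (hA0 : 0 < A) (hA1 : A ≤ 1) (hAσ : A ≤ σ) {p : ℕ} (hp : 1 ≤ p) :
    MapsTo ψ (tube 1 A (p + 1)) (tube 1 A p) := fun z hz => by
  rw [mem_tube_one_iff, Nat.cast_succ] at hz
  have hp0 : (0 : ℝ) < p := by exact_mod_cast hp
  have hzA : infDist z seg < A := hz.trans (div_lt_self hA0 (by linarith))
  rw [mem_tube_one_iff]
  exact (infDist_seg_apply_le hψd hψseg hlam (hzA.trans_le hAσ) (hzA.trans_le hA1)).trans_lt
    (div_one_sub_lt_div_of_lt_div_add_one infDist_nonneg hA1 hp0 hz)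

end

/-- a function `ψ`, holomorphic on `[-1,1]_σ`, mapping `[-1,1]` to
itself and with `λ(ψ) ≤ 1`, verifies the `E(1)` property; more precisely
`ψ([-1,1]_{1,A,p+1}) ⊆ [-1,1]_{1,A,p}` for `0 < A < min (1/2) σ` and `p ≥ 1`. -/
theorem lambda_le_one_implies_E1 (σ : ℝ) (hσ : 0 < σ) (ψ : ℂ → ℂ)
    (hψd : DifferentiableOn ℂ ψ (nbd σ))
    (hψseg : ∀ z ∈ seg, ψ z ∈ seg)
    (hlam : ∀ n : ℕ, 1 ≤ n → ∀ z ∈ seg, ‖iteratedDeriv n ψ z‖ ≤ (n.factorial : ℝ)) :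
    EProp 1 σ (fun _ : ℕ => ψ) ∧
    ∀ A : ℝ, 0 < A → A < min (1 / 2) σ → ∀ p : ℕ, 1 ≤ p →
      ∀ z ∈ tube 1 A (p + 1), ψ z ∈ tube 1 A p := by
  refine ⟨⟨min 1 σ, lt_min one_pos hσ, min_le_right _ _, fun A hA0 hAτ => ⟨1, ?_⟩⟩, ?_⟩
  · intro n hn _
    exact mapsTo_tube_one_succ hψd hψseg hlam hA0 (hAτ.trans (min_le_left _ _))
      (hAτ.trans (min_le_right _ _)) hn
  · intro A hA0 hA p hp
    rw [lt_min_iff] at hA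
    exact mapsTo_tube_one_succ hψd hψseg hlam hA0 (by linarith) hA.2.le hp
end
end

section
/- Let σ > 0 and let ψ be holomorphic on [-1,1]_σ with ψ([-1,1]) ⊆ [-1,1] and λ(ψ) ≤ 1 (i.e. ‖ψ^{(n)}‖_{∞,[-1,1]} ≤ n! for every n ≥ 1). Then for every z ∈ [-1,1]_σ with d := dist(z, I) < min(1, σ), the point ψ(z) satisfies dist(ψ(z), I) ≤ Σ_{j≥1} d^j = d/(1−d). -/
open Metric Set Filter

noncomputable section

/-- under `λ(ψ) ≤ 1`, a point `z` at distance `d < min 1 σ` from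
the segment is mapped by `ψ` to a point at distance at most `d / (1 - d)`. -/
theorem dist_image_le (σ : ℝ) (hσ : 0 < σ) (ψ : ℂ → ℂ)
    (hψd : DifferentiableOn ℂ ψ (nbd σ))
    (hψseg : ∀ z ∈ seg, ψ z ∈ seg)
    (hlam : ∀ n : ℕ, 1 ≤ n → ∀ z ∈ seg, ‖iteratedDeriv n ψ z‖ ≤ (n.factorial : ℝ))
    (z : ℂ) (hz : Metric.infDist z seg < min 1 σ) :
    Metric.infDist (ψ z) seg ≤
      Metric.infDist z seg / (1 - Metric.infDist z seg) := by
  have hsegc : IsCompact seg := isCompact_Icc.image Complex.continuous_ofReal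
  have hsegne : seg.Nonempty := ⟨(0 : ℂ), ⟨0, by norm_num, rfl⟩⟩
  obtain ⟨x, hxseg, hxd⟩ := hsegc.exists_infDist_eq_dist hsegne z
  set d := Metric.infDist z seg with hdd
  have hd0 : 0 ≤ d := Metric.infDist_nonneg
  have hd1 : d < 1 := lt_of_lt_of_le hz (min_le_left _ _)
  have hdσ : d < σ := lt_of_lt_of_le hz (min_le_right _ _)
  have hball : Metric.ball x σ ⊆ nbd σ := by
    intro w hw
    calc Metric.infDist w seg ≤ dist w x := Metric.infDist_le_dist_of_mem hxseg
      _ < σ := hw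
  have hzb : z ∈ Metric.ball x σ := by rw [Metric.mem_ball, ← hxd]; exact hdσ
  have hzx : ‖z - x‖ = d := by rw [← dist_eq_norm, ← hxd]
  have hsum := Complex.hasSum_taylorSeries_on_ball (hψd.mono hball) hzb
  have hsum' : HasSum
      (fun n : ℕ => (((n + 1).factorial : ℂ))⁻¹ • (z - x) ^ (n + 1)
        • iteratedDeriv (n + 1) ψ x) (ψ z - ψ x) := by
    rw [hasSum_nat_add_iff (f := fun n : ℕ =>
      ((n.factorial : ℂ))⁻¹ • (z - x) ^ n • iteratedDeriv n ψ x) 1]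
    simpa using hsum
  have hgeo : HasSum (fun n : ℕ => d ^ (n + 1)) (d / (1 - d)) := by
    have := (hasSum_geometric_of_lt_one hd0 hd1).mul_left d
    simpa [pow_succ', div_eq_mul_inv] using this
  have hle : ‖ψ z - ψ x‖ ≤ d / (1 - d) := by
    rw [← hsum'.tsum_eq]
    refine tsum_of_norm_bounded hgeo ?_
    intro n
    have hfacpos : (0 : ℝ) < ((n + 1).factorial : ℝ) := by positivity
    have hder := hlam (n + 1) (by omega) x hxseg
    have hnorm : ‖(((n + 1).factorial : ℂ))⁻¹‖ = (((n + 1).factorial : ℝ))⁻¹ := by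
      simp
    rw [norm_smul, norm_smul, norm_pow, hnorm, hzx]
    calc (((n + 1).factorial : ℝ))⁻¹ * (d ^ (n + 1) * ‖iteratedDeriv (n + 1) ψ x‖)
        ≤ (((n + 1).factorial : ℝ))⁻¹ * (d ^ (n + 1) * ((n + 1).factorial : ℝ)) := by
          gcongr
      _ = d ^ (n + 1) := by field_simp
  calc Metric.infDist (ψ z) seg ≤ dist (ψ z) (ψ x) :=
        Metric.infDist_le_dist_of_mem (hψseg x hxseg)
    _ = ‖ψ z - ψ x‖ := dist_eq_norm _ _
    _ ≤ d / (1 - d) := hle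
end
end

section
/- Let g be an entire function with g([-1,1]) ⊆ [-1,1] and λ(g) ≤ 1, and for n ≥ 1 define the entire function g_n(z) := g^{<n>}(z/2^{n-1}), where g^{<n>} is the n-th iterate of g. Then for every n ≥ 1 one has g_n([-1,1]) ⊆ [-1,1] and λ(g_n) ≤ 1, i.e. ‖g_n^{(p)}‖_{∞,[-1,1]} ≤ p! for every p ≥ 1. -/
open Metric Set Filter

noncomputable section

lemma norm_series_eq {f : ℂ → ℂ} {P : FormalMultilinearSeries ℂ ℂ ℂ} {x : ℂ}
    (hP : HasFPowerSeriesAt f P x) (n : ℕ) :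
    (n.factorial : ℝ) * ‖P n‖ = ‖iteratedDeriv n f x‖ := by
  obtain ⟨r, hr⟩ := hP
  have h := hr.factorial_smul (1 : ℂ) n
  have hcoeff : (P n fun _ => (1 : ℂ)) = P.coeff n := rfl
  rw [hcoeff] at h
  rw [FormalMultilinearSeries.norm_apply_eq_norm_coef,
    iteratedDeriv_eq_iteratedFDeriv, ← h, nsmul_eq_mul, norm_mul]
  simp

lemma comp_deriv_bound {gg hh : ℂ → ℂ} (hgd : Differentiable ℂ gg) (hhd : Differentiable ℂ hh)
    (x : ℂ) (lam : ℝ) (hlam : 0 ≤ lam)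
    (hgb : ∀ k : ℕ, 1 ≤ k → ‖iteratedDeriv k gg (hh x)‖ ≤ (k.factorial : ℝ))
    (hhb : ∀ k : ℕ, 1 ≤ k → ‖iteratedDeriv k hh x‖ ≤ (k.factorial : ℝ) * lam ^ k)
    (p : ℕ) (hp : 1 ≤ p) :
    ‖iteratedDeriv p (gg ∘ hh) x‖ ≤ (p.factorial : ℝ) * (2 ^ (p - 1) * lam ^ p) := by
  obtain ⟨P, hP⟩ := hhd.analyticAt x
  obtain ⟨Q, hQ⟩ := hgd.analyticAt (hh x)
  have hcomp : HasFPowerSeriesAt (gg ∘ hh) (Q.comp P) x := hQ.comp hP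
  have key : ‖(Q.comp P) p‖ ≤ (2 : ℝ) ^ (p - 1) * lam ^ p := by
    have hdef : (Q.comp P) p = ∑ c : Composition p, Q.compAlongComposition P c := rfl
    rw [hdef]
    refine (norm_sum_le _ _).trans ?_
    have hterm : ∀ c : Composition p, ‖Q.compAlongComposition P c‖ ≤ lam ^ p := by
      intro c
      refine (Q.compAlongComposition_norm P c).trans ?_
      have hl : 1 ≤ c.length := c.length_pos_of_pos (by omega)
      have hfac : (0 : ℝ) < (c.length.factorial : ℝ) := by
        exact_mod_cast c.length.factorial_pos
      have h1 : ‖Q c.length‖ ≤ 1 := by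
        have e := norm_series_eq hQ c.length
        have hb := hgb c.length hl
        nlinarith [norm_nonneg (Q c.length)]
      have h2 : ∀ i : Fin c.length, ‖P (c.blocksFun i)‖ ≤ lam ^ (c.blocksFun i) := by
        intro i
        have hk : 1 ≤ c.blocksFun i := c.one_le_blocksFun i
        have e := norm_series_eq hP (c.blocksFun i)
        have hb := hhb _ hk
        have hfac2 : (0 : ℝ) < ((c.blocksFun i).factorial : ℝ) := by
          exact_mod_cast (c.blocksFun i).factorial_pos
        nlinarith [norm_nonneg (P (c.blocksFun i)), pow_nonneg hlam (c.blocksFun i)]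
      calc ‖Q c.length‖ * ∏ i, ‖P (c.blocksFun i)‖
          ≤ 1 * ∏ i, lam ^ (c.blocksFun i) := by
            apply mul_le_mul h1 (Finset.prod_le_prod (fun i _ => norm_nonneg _) fun i _ => h2 i)
              (Finset.prod_nonneg fun i _ => norm_nonneg _) zero_le_one
        _ = lam ^ p := by
            rw [one_mul, Finset.prod_pow_eq_pow_sum, c.sum_blocksFun]
    refine (Finset.sum_le_sum fun c _ => hterm c).trans ?_
    rw [Finset.sum_const, Finset.card_univ, composition_card, nsmul_eq_mul]
    push_cast
    exact le_rfl
  have e := norm_series_eq hcomp p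
  have hfacp : (0 : ℝ) ≤ (p.factorial : ℝ) := by positivity
  nlinarith [norm_nonneg ((Q.comp P) p)]

lemma iter_bounds (g : ℂ → ℂ) (hg : Differentiable ℂ g)
    (hgseg : ∀ z ∈ seg, g z ∈ seg)
    (hglam : ∀ n : ℕ, 1 ≤ n → ∀ z ∈ seg, ‖iteratedDeriv n g z‖ ≤ (n.factorial : ℝ)) :
    ∀ m : ℕ, (∀ z ∈ seg, g^[m + 1] z ∈ seg) ∧
      ∀ p : ℕ, 1 ≤ p → ∀ z ∈ seg,
        ‖iteratedDeriv p (g^[m + 1]) z‖ ≤ (p.factorial : ℝ) * ((2 : ℝ) ^ m) ^ p := by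
  intro m
  induction m with
  | zero =>
    refine ⟨fun z hz => by simpa using hgseg z hz, fun p hp z hz => ?_⟩
    simpa using hglam p hp z hz
  | succ m ih =>
    have hiter : Differentiable ℂ (g^[m + 1]) := hg.iterate (m + 1)
    have hmem : ∀ z ∈ seg, g^[m + 2] z ∈ seg := by
      intro z hz
      rw [Function.iterate_succ_apply']
      exact hgseg _ (ih.1 z hz)
    refine ⟨hmem, fun p hp z hz => ?_⟩
    have hrw : g^[m + 2] = g ∘ g^[m + 1] := Function.iterate_succ' g (m + 1)
    rw [hrw]
    have hb := comp_deriv_bound hg hiter z ((2 : ℝ) ^ m) (by positivity)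
      (fun k hk => hglam k hk _ (ih.1 z hz)) (fun k hk => ih.2 k hk z hz) p hp
    refine hb.trans ?_
    have h2 : (2 : ℝ) ^ (p - 1) * ((2 : ℝ) ^ m) ^ p ≤ ((2 : ℝ) ^ (m + 1)) ^ p := by
      rw [← pow_mul, ← pow_mul, ← pow_add]
      have hexp : p - 1 + m * p ≤ (m + 1) * p := by rw [add_mul, one_mul]; omega
      exact pow_le_pow_right₀ one_le_two hexp
    have hf : (0 : ℝ) ≤ (p.factorial : ℝ) := by positivity
    exact mul_le_mul_of_nonneg_left h2 hf

lemma seg_div_pow {z : ℂ} (hz : z ∈ seg) (m : ℕ) : z / 2 ^ m ∈ seg := by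
  obtain ⟨x, hx, rfl⟩ := hz
  rw [Set.mem_Icc] at hx
  have h2 : (0 : ℝ) < 2 ^ m := by positivity
  have h1 : (1 : ℝ) ≤ 2 ^ m := one_le_pow₀ one_le_two
  refine ⟨x / 2 ^ m, Set.mem_Icc.mpr ⟨?_, ?_⟩, by push_cast; ring⟩
  · rw [le_div_iff₀ h2]; nlinarith
  · rw [div_le_one h2]; nlinarith

/-- for `g` entire with `g([-1,1]) ⊆ [-1,1]` and `λ(g) ≤ 1`, the
functions `g_n(z) = g^{<n>}(z / 2^{n-1})` map `[-1,1]` into itself and satisfy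
`λ(g_n) ≤ 1`. -/
theorem iterates_lambda_le_one (g : ℂ → ℂ) (hg : Differentiable ℂ g)
    (hgseg : ∀ z ∈ seg, g z ∈ seg)
    (hglam : ∀ n : ℕ, 1 ≤ n → ∀ z ∈ seg, ‖iteratedDeriv n g z‖ ≤ (n.factorial : ℝ)) :
    ∀ n : ℕ, 1 ≤ n →
      (∀ z ∈ seg, g^[n] (z / 2 ^ (n - 1)) ∈ seg) ∧
      ∀ p : ℕ, 1 ≤ p → ∀ z ∈ seg,
        ‖iteratedDeriv p (fun w : ℂ => g^[n] (w / 2 ^ (n - 1))) z‖ ≤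
          (p.factorial : ℝ) := by
  intro n hn
  obtain ⟨m, rfl⟩ : ∃ m, n = m + 1 := ⟨n - 1, by omega⟩
  simp only [Nat.add_sub_cancel]
  have hib := iter_bounds g hg hgseg hglam m
  constructor
  · intro z hz
    exact hib.1 _ (seg_div_pow hz m)
  · intro p hp z hz
    have hiter : Differentiable ℂ (g^[m + 1]) := hg.iterate (m + 1)
    set c : ℂ := ((2 : ℂ) ^ m)⁻¹ with hc
    have hfun : (fun w : ℂ => g^[m + 1] (w / 2 ^ m)) = fun w : ℂ => g^[m + 1] (c * w) := by
      funext w; rw [hc, div_eq_mul_inv, mul_comm]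
    rw [hfun, iteratedDeriv_comp_const_mul hiter.contDiff c]
    have hcz : c * z ∈ seg := by
      have h := seg_div_pow hz m
      rwa [div_eq_mul_inv, mul_comm] at h
    have hb := hib.2 p hp (c * z) hcz
    rw [norm_mul, norm_pow]
    have hnc : ‖c‖ = ((2 : ℝ) ^ m)⁻¹ := by
      simp [hc]
    rw [hnc]
    have hpos : (0 : ℝ) < (2 : ℝ) ^ m := by positivity
    calc (((2 : ℝ) ^ m)⁻¹) ^ p * ‖iteratedDeriv p (g^[m + 1]) (c * z)‖
        ≤ (((2 : ℝ) ^ m)⁻¹) ^ p * ((p.factorial : ℝ) * ((2 : ℝ) ^ m) ^ p) :=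
          mul_le_mul_of_nonneg_left hb (by positivity)
      _ = ((((2 : ℝ) ^ m)⁻¹) ^ p * ((2 : ℝ) ^ m) ^ p) * (p.factorial : ℝ) := by ring
      _ = (p.factorial : ℝ) := by
          rw [← mul_pow, inv_mul_cancel₀ hpos.ne', one_pow, one_mul]
end
end

section
/- The linear functional equation Φ(x) − (1/2)·Φ(sin x) = −x, x ∈ [-1,1], has a unique continuous solution Φ : [-1,1] → ℂ, and this solution belongs to the Gevrey class G_1([-1,1]). -/
open Metric Set Filter

noncomputable section

/-!
Iterating the equation gives `Φ(x) = -∑_{n ≥ 0} 2^{-n} sin^{∘n}(x)`, and two continuous solutions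
differ by a bounded `u` with `u = (u ∘ sin) / 2`, hence by `0`.

For the Gevrey bound: `sin^{∘n}` is entire and stays bounded on the strip `|Im z| ≤ 1/(4n)`,
because `|Im sin w| ≤ sinh |Im w| ≤ |Im w| + |Im w|³`. Cauchy's estimate on discs of radius
`1/(4n)` around points of `[-1,1]` bounds its `k`-th derivative by `C k! (4n)^k`, and
`∑ 2^{-n} n^k ≤ C' k! A^k` (from `xᵏ/k! ≤ eˣ`), so `Φ^{(k)} = O(A'^k (k!)²)`.
-/

open scoped Nat

lemma Real.sinh_le_self_add_pow_three {b : ℝ} (hb0 : 0 ≤ b) (hb1 : b ≤ 1) :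
    Real.sinh b ≤ b + b ^ 3 := by
  have hb : |b| ≤ 1 := abs_le.2 ⟨by linarith, hb1⟩
  have hexp := abs_le.1 (Real.exp_bound hb (n := 3) (by norm_num))
  have hexp_neg := abs_le.1 (Real.exp_bound (x := -b) (by rwa [abs_neg]) (n := 3) (by norm_num))
  norm_num [Finset.sum_range_succ, Nat.factorial, abs_of_nonneg hb0] at hexp hexp_neg
  rw [Real.sinh_eq]
  nlinarith [pow_nonneg hb0 3]

lemma Complex.im_sin (w : ℂ) : (Complex.sin w).im = Real.cos w.re * Real.sinh w.im := by
  rw [Complex.sin_eq]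
  simp [Complex.sin_ofReal_im, Complex.cos_ofReal_re, Complex.sinh_ofReal_re,
    Complex.cosh_ofReal_im, Complex.sinh_ofReal_im, Complex.cos_ofReal_im,
    Complex.sin_ofReal_re, Complex.cosh_ofReal_re]

lemma Complex.abs_im_sin_le (w : ℂ) : |(Complex.sin w).im| ≤ Real.sinh |w.im| := by
  rw [Complex.im_sin, abs_mul, Real.abs_sinh]
  exact mul_le_of_le_one_left (Real.sinh_nonneg_iff.2 (abs_nonneg _)) (Real.abs_cos_le_one _)

lemma Complex.norm_sin_le_exp_abs_im (w : ℂ) : ‖Complex.sin w‖ ≤ Real.exp |w.im| := by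
  have h₁ : ‖Complex.exp (-w * Complex.I)‖ ≤ Real.exp |w.im| := by
    simpa [Complex.norm_exp] using le_abs_self w.im
  have h₂ : ‖Complex.exp (w * Complex.I)‖ ≤ Real.exp |w.im| := by
    simpa [Complex.norm_exp] using neg_le_abs w.im
  rw [Complex.sin, norm_div, norm_mul, Complex.norm_I, mul_one, RCLike.norm_two]
  linarith [norm_sub_le (Complex.exp (-w * Complex.I)) (Complex.exp (w * Complex.I))]

/-- Since `sinh b ≤ b + b³`, each application of `sin` adds at most `8c³` to `|Im|` as long as
`|Im| ≤ 2c`, which survives `n` steps when `8nc² ≤ 1`. -/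
lemma abs_im_sin_iterate_le {n : ℕ} {c : ℝ} (hc0 : 0 ≤ c) (hc : c ≤ 1 / 2)
    (hnc : 8 * n * c ^ 2 ≤ 1) {z : ℂ} (hz : |z.im| ≤ c) {j : ℕ} (hj : j ≤ n) :
    |(Complex.sin^[j] z).im| ≤ c + 8 * j * c ^ 3 := by
  induction j with
  | zero => simpa using hz
  | succ j ih =>
    set b := |(Complex.sin^[j] z).im|
    have hb0 : 0 ≤ b := abs_nonneg _
    have hjn : (j : ℝ) ≤ n := by exact_mod_cast (Nat.le_of_succ_le hj)
    have hb : b ≤ 2 * c := by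
      nlinarith [ih (Nat.le_of_succ_le hj), pow_nonneg hc0 3, mul_le_mul_of_nonneg_right hjn
        (pow_nonneg hc0 3)]
    calc |(Complex.sin^[j + 1] z).im| = |(Complex.sin (Complex.sin^[j] z)).im| := by
          rw [Function.iterate_succ_apply']
      _ ≤ Real.sinh b := Complex.abs_im_sin_le _
      _ ≤ b + b ^ 3 := Real.sinh_le_self_add_pow_three hb0 (by linarith)
      _ ≤ c + 8 * (j + 1 : ℕ) * c ^ 3 := by
          push_cast
          nlinarith [ih (Nat.le_of_succ_le hj), pow_le_pow_left₀ hb0 hb 3]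

lemma norm_sin_iterate_succ_le {n : ℕ} {z : ℂ} (hz : |z.im| ≤ 1 / (4 * (n + 1))) :
    ‖Complex.sin^[n + 1] z‖ ≤ Real.exp 1 := by
  set c : ℝ := 1 / (4 * (n + 1)) with hc_def
  have hc0 : 0 < c := by positivity
  have hcn : c * (4 * (n + 1)) = 1 := by rw [hc_def]; field_simp
  have hc : c ≤ 1 / 4 := by nlinarith [(n.cast_nonneg : (0 : ℝ) ≤ n)]
  have hnc : 8 * n * c ^ 2 ≤ 1 := by nlinarith
  have him := abs_im_sin_iterate_le hc0.le (by linarith) hnc hz le_rfl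
  rw [Function.iterate_succ_apply']
  refine (Complex.norm_sin_le_exp_abs_im _).trans (Real.exp_le_exp.2 ?_)
  nlinarith [pow_pos hc0 3]

lemma iteratedDeriv_comp_ofReal {F : ℂ → ℂ} (hF : Differentiable ℂ F) (k : ℕ) (x : ℝ) :
    iteratedDeriv k (fun t : ℝ => F t) x = iteratedDeriv k F x := by
  induction k generalizing F with
  | zero => simp
  | succ k ih =>
    have hderiv : (deriv fun t : ℝ => F t) = fun t : ℝ => deriv F t :=
      funext fun t => (hF t).hasDerivAt.comp_ofReal.deriv
    rw [iteratedDeriv_succ', iteratedDeriv_succ', hderiv]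
    exact ih (hF.contDiff (n := 2).differentiable_deriv_two)

lemma norm_iteratedDeriv_comp_ofReal_le {F : ℂ → ℂ} (hF : Differentiable ℂ F) {x : ℝ}
    {R M : ℝ} (hR : 0 < R) (hM : ∀ w ∈ Metric.sphere (x : ℂ) R, ‖F w‖ ≤ M) (k : ℕ) :
    ‖iteratedDeriv k (fun t : ℝ => F t) x‖ ≤ k ! * M / R ^ k := by
  rw [iteratedDeriv_comp_ofReal hF]
  exact Complex.norm_iteratedDeriv_le_of_forall_mem_sphere_norm_le k hR hF.diffContOnCl hM

lemma add_one_pow_mul_pow_le {r t : ℝ} (hr : 0 ≤ r) (ht : 0 < t) (k m : ℕ) :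
    ((m : ℝ) + 1) ^ k * r ^ m ≤ k ! * Real.exp t / t ^ k * (r * Real.exp t) ^ m := by
  have h := Real.pow_div_factorial_le_exp (t * (m + 1)) (by positivity) k
  have hexp : Real.exp (t * (m + 1)) = Real.exp t * Real.exp t ^ m := by
    rw [← Real.exp_nat_mul, ← Real.exp_add]
    ring_nf
  rw [div_le_iff₀ (by positivity), mul_pow, hexp] at h
  rw [div_mul_eq_mul_div, le_div_iff₀ (by positivity), mul_pow]
  calc ((m : ℝ) + 1) ^ k * r ^ m * t ^ k = t ^ k * ((m : ℝ) + 1) ^ k * r ^ m := by ring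
    _ ≤ Real.exp t * Real.exp t ^ m * k ! * r ^ m := by gcongr
    _ = k ! * Real.exp t * (r ^ m * Real.exp t ^ m) := by ring

lemma eq_zero_of_bounded_of_eq_smul_comp {α E : Type*} [NormedAddCommGroup E]
    [NormedSpace ℂ E] {s : Set α} {f : α → α} (hf : Set.MapsTo f s s) {c : ℂ} (hc : ‖c‖ < 1)
    {u : α → E} {M : ℝ} (hM : ∀ x ∈ s, ‖u x‖ ≤ M) (hu : ∀ x ∈ s, u x = c • u (f x))
    {x : α} (hx : x ∈ s) : u x = 0 := by
  have hdecay : ∀ N : ℕ, ∀ x ∈ s, ‖u x‖ ≤ ‖c‖ ^ N * M := by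
    intro N
    induction N with
    | zero => simpa using hM
    | succ N ih =>
      intro x hx
      rw [hu x hx, norm_smul, pow_succ', mul_assoc]
      exact mul_le_mul_of_nonneg_left (ih (f x) (hf hx)) (norm_nonneg c)
  have hlim : Filter.Tendsto (fun N : ℕ => ‖c‖ ^ N * M) Filter.atTop (nhds 0) := by
    simpa using (tendsto_pow_atTop_nhds_zero_of_lt_one (norm_nonneg c) hc).mul_const M
  exact norm_le_zero_iff.1 (ge_of_tendsto' hlim fun N => hdecay N x hx)

lemma gevreyClass_one_of_norm_iteratedDeriv_le {f : ℝ → ℂ} (hf : ContDiff ℝ (⊤ : ℕ∞) f)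
    {C A : ℝ} (hC : 0 < C) (hA : 0 < A)
    (hbound : ∀ k : ℕ, ∀ x ∈ Set.Icc (-1 : ℝ) 1,
      ‖iteratedDeriv k f x‖ ≤ C * A ^ k * (k ! : ℝ) ^ 2) :
    GevreyClass 1 f := by
  refine ⟨hf.contDiffOn, C, hC, A, hA, fun k x hx => ?_⟩
  rw [iteratedDerivWithin_eq_iteratedDeriv (uniqueDiffOn_Icc (by norm_num))
    (hf.contDiffAt.of_le (mod_cast le_top)) hx]
  have hexp : (k : ℝ) ^ ((k : ℝ) * (1 + 1 / 1)) = ((k : ℝ) ^ k) ^ 2 := by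
    rw [show (k : ℝ) * (1 + 1 / 1) = ((k * 2 : ℕ) : ℝ) by push_cast; ring, Real.rpow_natCast,
      pow_mul]
  rw [hexp]
  refine (hbound k x hx).trans ?_
  gcongr
  exact_mod_cast Nat.factorial_le_pow k

namespace SinEquation

def sinTerm (n : ℕ) (z : ℂ) : ℂ := (1 / 2 : ℂ) ^ (n + 1) * Complex.sin^[n + 1] z

def sinSeries (x : ℝ) : ℂ := ∑' n, sinTerm n x

def solution (x : ℝ) : ℂ := -x - sinSeries x

lemma differentiable_sinTerm (n : ℕ) : Differentiable ℂ (sinTerm n) :=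
  (Complex.differentiable_sin.iterate _).const_mul _

lemma norm_sinTerm_le {n : ℕ} {z : ℂ} (hz : |z.im| ≤ 1 / (4 * (n + 1))) :
    ‖sinTerm n z‖ ≤ (1 / 2) ^ (n + 1) * Real.exp 1 := by
  rw [sinTerm, norm_mul, norm_pow, norm_div, norm_one, RCLike.norm_two]
  gcongr
  exact norm_sin_iterate_succ_le hz

lemma summable_sinTerm (x : ℝ) : Summable fun n => sinTerm n x :=
  .of_norm_bounded (((summable_nat_add_iff 1).2 summable_geometric_two).mul_right (Real.exp 1))
    fun n => norm_sinTerm_le (by simp; positivity)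

lemma sinSeries_eq (x : ℝ) :
    sinSeries x = 1 / 2 * Complex.sin x + 1 / 2 * sinSeries (Real.sin x) := by
  have hshift (n : ℕ) : sinTerm (n + 1) x = 1 / 2 * sinTerm n (Real.sin x) := by
    rw [sinTerm, sinTerm, Complex.ofReal_sin, Function.iterate_succ_apply]
    ring
  rw [sinSeries, (summable_sinTerm x).tsum_eq_zero_add, tsum_congr hshift, tsum_mul_left, sinSeries]
  simp [sinTerm]

lemma solution_sub_half_comp_sin (x : ℝ) :
    solution x - 1 / 2 * solution (Real.sin x) = -x := by
  rw [solution, solution, sinSeries_eq, Complex.ofReal_sin]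
  ring


/-- Cauchy's bound for `sinTerm n` on the circle of radius `1 / (4 (n + 1))`. -/
def derivBound (k n : ℕ) : ℝ := k ! * ((1 / 2) ^ (n + 1) * Real.exp 1) / (1 / (4 * (n + 1))) ^ k

lemma norm_iteratedFDeriv_sinTerm_le (k n : ℕ) (x : ℝ) :
    ‖iteratedFDeriv ℝ k (fun t : ℝ => sinTerm n t) x‖ ≤ derivBound k n := by
  rw [norm_iteratedFDeriv_eq_norm_iteratedDeriv]
  refine norm_iteratedDeriv_comp_ofReal_le (differentiable_sinTerm n) (by positivity)
    (fun w hw => norm_sinTerm_le ?_) k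
  calc |w.im| = |(w - x).im| := by simp
    _ ≤ ‖w - x‖ := Complex.abs_im_le_norm _
    _ = 1 / (4 * (n + 1)) := mem_sphere_iff_norm.1 hw

lemma derivBound_le (k n : ℕ) :
    derivBound k n ≤ 3 / 4 * Real.exp 1 * ((k ! : ℝ) ^ 2 * (4 / Real.log (3 / 2)) ^ k) *
      (3 / 4) ^ n := by
  have hlog : 0 < Real.log (3 / 2) := Real.log_pos (by norm_num)
  have h := add_one_pow_mul_pow_le (r := 1 / 2) (by norm_num) hlog k n
  rw [Real.exp_log (by norm_num)] at h
  calc derivBound k n = k ! * Real.exp 1 * 4 ^ k / 2 * (((n : ℝ) + 1) ^ k * (1 / 2) ^ n) := by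
        simp only [derivBound, one_div, inv_pow, div_inv_eq_mul, mul_pow]; ring
    _ ≤ k ! * Real.exp 1 * 4 ^ k / 2 * (k ! * (3 / 2) / Real.log (3 / 2) ^ k *
          (1 / 2 * (3 / 2)) ^ n) := by gcongr
    _ = _ := by rw [div_pow]; field_simp; ring

lemma summable_derivBound (k : ℕ) : Summable (derivBound k) :=
  .of_nonneg_of_le (fun n => by rw [derivBound]; positivity) (derivBound_le k)
    ((summable_geometric_of_lt_one (by norm_num) (by norm_num)).mul_left _)

lemma tsum_derivBound_le (k : ℕ) :
    ∑' n, derivBound k n ≤ 3 * Real.exp 1 * ((k ! : ℝ) ^ 2 * (4 / Real.log (3 / 2)) ^ k) := by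
  have hgeom := summable_geometric_of_lt_one (r := (3 / 4 : ℝ)) (by norm_num) (by norm_num)
  calc ∑' n, derivBound k n
      ≤ ∑' n, 3 / 4 * Real.exp 1 * ((k ! : ℝ) ^ 2 * (4 / Real.log (3 / 2)) ^ k) * (3 / 4) ^ n :=
        (summable_derivBound k).tsum_le_tsum (derivBound_le k) (hgeom.mul_left _)
    _ = _ := by rw [tsum_mul_left, tsum_geometric_of_lt_one (by norm_num) (by norm_num)]; ring

lemma contDiff_sinTerm_ofReal (n : ℕ) : ContDiff ℝ (⊤ : ℕ∞) fun t : ℝ => sinTerm n t :=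
  ((differentiable_sinTerm n).contDiff.restrict_scalars ℝ).comp Complex.ofRealCLM.contDiff

lemma contDiff_sinSeries : ContDiff ℝ (⊤ : ℕ∞) sinSeries :=
  contDiff_tsum contDiff_sinTerm_ofReal (fun k _ => summable_derivBound k)
    (fun k n x _ => norm_iteratedFDeriv_sinTerm_le k n x)

lemma norm_iteratedDeriv_sinSeries_le (k : ℕ) (x : ℝ) :
    ‖iteratedDeriv k sinSeries x‖ ≤ ∑' n, derivBound k n := by
  unfold sinSeries
  rw [← norm_iteratedFDeriv_eq_norm_iteratedDeriv,
    iteratedFDeriv_tsum_apply contDiff_sinTerm_ofReal (fun k _ => summable_derivBound k)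
      (fun k n x _ => norm_iteratedFDeriv_sinTerm_le k n x) (mod_cast le_top)]
  exact tsum_of_norm_bounded (summable_derivBound k).hasSum
    fun n => norm_iteratedFDeriv_sinTerm_le k n x


lemma contDiff_solution : ContDiff ℝ (⊤ : ℕ∞) solution :=
  Complex.ofRealCLM.contDiff.neg.sub contDiff_sinSeries

lemma norm_iteratedDeriv_solution_le (k : ℕ) {x : ℝ} (hx : x ∈ Set.Icc (-1 : ℝ) 1) :
    ‖iteratedDeriv k solution x‖ ≤
      (2 + 3 * Real.exp 1) * (4 / Real.log (3 / 2)) ^ k * (k ! : ℝ) ^ 2 := by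
  have hlinear : ‖iteratedDeriv k (fun t : ℝ => -(t : ℂ)) x‖ ≤ k ! * 2 / 1 ^ k := by
    refine norm_iteratedDeriv_comp_ofReal_le (F := fun z => -z) differentiable_neg one_pos
      (fun w hw => ?_) k
    have hx' : ‖(x : ℂ)‖ ≤ 1 := by simpa [abs_le] using hx
    calc ‖-w‖ = ‖(w - x) + x‖ := by rw [norm_neg, sub_add_cancel]
      _ ≤ ‖w - x‖ + ‖(x : ℂ)‖ := norm_add_le _ _
      _ ≤ 2 := by linarith [mem_sphere_iff_norm.1 hw]
  have hsplit : iteratedDeriv k solution x =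
      iteratedDeriv k (fun t : ℝ => -(t : ℂ)) x - iteratedDeriv k sinSeries x :=
    iteratedDeriv_fun_sub (Complex.ofRealCLM.contDiff.neg.contDiffAt)
      (contDiff_sinSeries.contDiffAt.of_le (mod_cast le_top))
  have hA : 1 ≤ (4 / Real.log (3 / 2)) ^ k := by
    refine one_le_pow₀ ((one_le_div (Real.log_pos (by norm_num))).2 ?_)
    linarith [Real.log_le_sub_one_of_pos (by norm_num : (0 : ℝ) < 3 / 2)]
  have hfac : (k ! : ℝ) ≤ (k ! : ℝ) ^ 2 := by
    nlinarith [(Nat.one_le_cast.2 (Nat.factorial_pos k) : (1 : ℝ) ≤ k !)]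
  calc ‖iteratedDeriv k solution x‖
      ≤ ‖iteratedDeriv k (fun t : ℝ => -(t : ℂ)) x‖ + ‖iteratedDeriv k sinSeries x‖ := by
        rw [hsplit]; exact norm_sub_le _ _
    _ ≤ k ! * 2 + 3 * Real.exp 1 * ((k ! : ℝ) ^ 2 * (4 / Real.log (3 / 2)) ^ k) := by
        rw [one_pow, div_one] at hlinear
        linarith [(norm_iteratedDeriv_sinSeries_le k x).trans (tsum_derivBound_le k)]
    _ ≤ _ := by nlinarith [Real.exp_pos 1, sq_nonneg (k ! : ℝ)]

end SinEquation

/-- the equation `Φ(x) - (1/2) Φ(sin x) = -x` has on `[-1,1]` a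
unique continuous solution, which belongs to `G_1([-1,1])`. -/
theorem example_sin_equation :
    ∃ Φ : ℝ → ℂ,
      (ContinuousOn Φ (Set.Icc (-1) 1) ∧
        ∀ x ∈ Set.Icc (-1 : ℝ) 1,
          Φ x - (1 / 2 : ℂ) * Φ (Real.sin x) = -(x : ℂ)) ∧
      GevreyClass 1 Φ ∧
      ∀ Ψ : ℝ → ℂ, ContinuousOn Ψ (Set.Icc (-1) 1) →
        (∀ x ∈ Set.Icc (-1 : ℝ) 1,
          Ψ x - (1 / 2 : ℂ) * Ψ (Real.sin x) = -(x : ℂ)) →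
        ∀ x ∈ Set.Icc (-1 : ℝ) 1, Ψ x = Φ x := by
  have hcont := SinEquation.contDiff_solution.continuous.continuousOn (s := Set.Icc (-1 : ℝ) 1)
  refine ⟨SinEquation.solution, ⟨hcont, fun x _ => SinEquation.solution_sub_half_comp_sin x⟩,
    gevreyClass_one_of_norm_iteratedDeriv_le SinEquation.contDiff_solution (by positivity)
      (div_pos four_pos (Real.log_pos (by norm_num)))
      fun k x hx => SinEquation.norm_iteratedDeriv_solution_le k hx, ?_⟩
  intro Ψ hΨ hΨeq x hx
  obtain ⟨M, hM⟩ := isCompact_Icc.exists_bound_of_continuousOn (hΨ.sub hcont)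
  have hsin : Set.MapsTo Real.sin (Set.Icc (-1) 1) (Set.Icc (-1) 1) :=
    fun y _ => ⟨Real.neg_one_le_sin y, Real.sin_le_one y⟩
  refine sub_eq_zero.1 (eq_zero_of_bounded_of_eq_smul_comp hsin (c := 1 / 2) (by norm_num) hM
    (fun y hy => ?_) hx)
  simp only [Pi.sub_apply, smul_eq_mul]
  linear_combination hΨeq y hy - SinEquation.solution_sub_half_comp_sin y
end
end
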